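/- Let b(z) = (1+z)/2 and let φ : D → D be analytic. If the composition operator C_φ is bounded on H(b), then either the non-tangential limit φ(1) belongs to D or φ(1) = 1. -/

import Mathlib

open Complex MeasureTheory Set Filter

noncomputable section

attribute [local instance] Classical.propDecidable

/-- The open unit disk in `ℂ`. -/
def unitDisk : Set ℂ := Metric.ball 0 1

/-- The unit circle in `ℂ`. -/
def unitCircle : Set ℂ := Metric.sphere 0 1

/-- Membership in `H^∞`: analytic and bounded on the unit disk. -/
def MemHinf (f : ℂ → ℂ) : Prop :=
  DifferentiableOn ℂ f unitDisk ∧ ∃ C : ℝ, ∀ z ∈ unitDisk, ‖f z‖ ≤ C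

/-- Membership in the closed unit ball of `H^∞`. -/
def MemBallHinf (f : ℂ → ℂ) : Prop :=
  DifferentiableOn ℂ f unitDisk ∧ ∀ z ∈ unitDisk, ‖f z‖ ≤ 1

/-- `f` agrees on the closed unit disk with a rational function without poles there. -/
def IsRationalOnDisk (f : ℂ → ℂ) : Prop :=
  ∃ P Q : Polynomial ℂ, ∀ z ∈ Metric.closedBall (0:ℂ) 1,
    Q.eval z ≠ 0 ∧ f z = P.eval z / Q.eval z

/-- `f` is a finite Blaschke product (multiplicities are encoded by repetition). -/
def IsFiniteBlaschke (f : ℂ → ℂ) : Prop :=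
  ∃ (γ : ℂ) (k : ℕ) (lam : Fin k → ℂ), ‖γ‖ = 1 ∧ (∀ i, lam i ∈ unitDisk) ∧
    ∀ z ∈ unitDisk, f z = γ * ∏ i, (z - lam i) / (1 - (starRingEnd ℂ) (lam i) * z)

/-- The `k`-th Taylor coefficient of `f` at the origin. -/
def taylorCoeff (f : ℂ → ℂ) (k : ℕ) : ℂ := iteratedDeriv k f 0 / k.factorial

/-- Membership in the Hardy space `H²` (square-summable Taylor coefficients). -/
def MemH2 (f : ℂ → ℂ) : Prop :=
  DifferentiableOn ℂ f unitDisk ∧ Summable fun k => ‖taylorCoeff f k‖ ^ 2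

/-- The squared `H²` norm. -/
def h2NormSq (f : ℂ → ℂ) : ℝ := ∑' k, ‖taylorCoeff f k‖ ^ 2

/-- The `H²` inner product. -/
def h2Inner (f g : ℂ → ℂ) : ℂ :=
  ∑' k, (starRingEnd ℂ) (taylorCoeff f k) * taylorCoeff g k

/-- The polynomial `a₁(z) = ∏ⱼ (z − ξⱼ)^{mⱼ}`. -/
def a1fun {n : ℕ} (ξ : Fin n → ℂ) (m : Fin n → ℕ) : ℂ → ℂ :=
  fun z => ∏ j, (z - ξ j) ^ (m j)

/-- A decomposition `f = a₁ g + q` with `g ∈ H²`, `deg q ≤ N − 1`, witnessing membership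
in `H(b) = a₁H² ⊕ P_{N−1}`. -/
def HbDecompOf {n : ℕ} (ξ : Fin n → ℂ) (m : Fin n → ℕ)
    (f g : ℂ → ℂ) (q : Polynomial ℂ) : Prop :=
  MemH2 g ∧ q.degree < ((∑ j, m j : ℕ) : WithBot ℕ) ∧
    ∀ z ∈ unitDisk, f z = a1fun ξ m z * g z + q.eval z

/-- Membership in `H(b) = a₁ H² ⊕ P_{N−1}` (description of `H(b)` for `b` rational,
not a finite Blaschke product, whose pythagorean mate has boundary zeros `ξ` with
multiplicities `m`). -/
def MemHb {n : ℕ} (ξ : Fin n → ℂ) (m : Fin n → ℕ) (f : ℂ → ℂ) : Prop :=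
  ∃ gq : (ℂ → ℂ) × Polynomial ℂ, HbDecompOf ξ m f gq.1 gq.2

/-- The (unique) decomposition of a member of `H(b)`. -/
def hbDecomp {n : ℕ} (ξ : Fin n → ℂ) (m : Fin n → ℕ) (f : ℂ → ℂ) :
    (ℂ → ℂ) × Polynomial ℂ :=
  if h : MemHb ξ m f then h.choose else (0, 0)

/-- The squared norm `⦀a₁g + q⦀² = ‖g‖²_{H²} + ‖q‖²_{H²}` on `H(b)`. -/
def hbNormSq {n : ℕ} (ξ : Fin n → ℂ) (m : Fin n → ℕ) (f : ℂ → ℂ) : ℝ :=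
  h2NormSq (hbDecomp ξ m f).1 + h2NormSq fun z => ((hbDecomp ξ m f).2).eval z

/-- The inner product on `H(b)` induced by the decomposition. -/
def hbInner {n : ℕ} (ξ : Fin n → ℂ) (m : Fin n → ℕ) (f g : ℂ → ℂ) : ℂ :=
  h2Inner (hbDecomp ξ m f).1 (hbDecomp ξ m g).1 +
    h2Inner (fun z => ((hbDecomp ξ m f).2).eval z)
      (fun z => ((hbDecomp ξ m g).2).eval z)

/-- The Stolz angle (non-tangential approach region) at a boundary point `ξ`. -/
def stolzAngle (ξ : ℂ) (M : ℝ) : Set ℂ := {z ∈ unitDisk | ‖z - ξ‖ ≤ M * (1 - ‖z‖)}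

/-- `f` has non-tangential limit `L` at `ξ`. -/
def NTLimit (f : ℂ → ℂ) (ξ L : ℂ) : Prop :=
  ∀ M : ℝ, 1 < M → Tendsto f (nhdsWithin ξ (stolzAngle ξ M)) (nhds L)

/-- Radial boundary value of `f` at `ζ` (junk value if the radial limit does not exist). -/
def bdryVal (f : ℂ → ℂ) (ζ : ℂ) : ℂ :=
  limUnder (nhdsWithin (1:ℝ) (Set.Iio 1)) fun r : ℝ => f ((r : ℂ) * ζ)

/-- The full setting: `b` is a rational function in the closed unit ball of `H^∞` with
`‖b‖_∞ = 1` which is not a finite Blaschke product; `a` is its pythagorean mate (rational,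
outer — i.e. zero-free on the disk —, `a(0) > 0`, `|a|² + |b|² = 1` on the circle); the
`ξ j` are the distinct zeros of `a` on the unit circle, with multiplicities `m j`. -/
structure RationalSetting (b a : ℂ → ℂ) (n : ℕ) (ξ : Fin n → ℂ) (m : Fin n → ℕ) :
    Prop where
  b_diff : DifferentiableOn ℂ b unitDisk
  b_rat : IsRationalOnDisk b
  b_le_one : ∀ z ∈ unitDisk, ‖b z‖ ≤ 1
  b_norm_one : sSup ((fun z => ‖b z‖) '' unitDisk) = 1
  b_not_fbp : ¬ IsFiniteBlaschke b
  a_diff : DifferentiableOn ℂ a unitDisk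
  a_rat : IsRationalOnDisk a
  a_outer : ∀ z ∈ unitDisk, a z ≠ 0
  a_zero_pos : 0 < (a 0).re ∧ (a 0).im = 0
  pyth : ∀ ζ ∈ unitCircle, ‖a ζ‖ ^ 2 + ‖b ζ‖ ^ 2 = 1
  zeros_mem : ∀ j, ξ j ∈ unitCircle
  zeros_inj : Function.Injective ξ
  mult_pos : ∀ j, 0 < m j
  factor : ∃ g : ℂ → ℂ, IsRationalOnDisk g ∧ (∀ ζ ∈ unitCircle, g ζ ≠ 0) ∧
    ∀ z ∈ Metric.closedBall (0:ℂ) 1, a z = a1fun ξ m z * g z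

/-- The composition operator `C_φ` maps `H(b)` into itself and is bounded there
(with respect to the equivalent norm `⦀·⦀_b`). -/
def CompBddHb {n : ℕ} (ξ : Fin n → ℂ) (m : Fin n → ℕ) (φ : ℂ → ℂ) : Prop :=
  (∀ f, MemHb ξ m f → MemHb ξ m fun z => f (φ z)) ∧
  ∃ C : ℝ, ∀ f, MemHb ξ m f →
    hbNormSq ξ m (fun z => f (φ z)) ≤ C * hbNormSq ξ m f

/-- The composition operator `C_φ` is compact on `H(b)`: it is bounded and the image of
every sequence in the unit ball has a subsequence whose image converges in `H(b)`. -/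
def CompCompactHb {n : ℕ} (ξ : Fin n → ℂ) (m : Fin n → ℕ) (φ : ℂ → ℂ) : Prop :=
  CompBddHb ξ m φ ∧
  ∀ f : ℕ → ℂ → ℂ, (∀ k, MemHb ξ m (f k) ∧ hbNormSq ξ m (f k) ≤ 1) →
    ∃ (κ : ℕ → ℕ) (g : ℂ → ℂ), StrictMono κ ∧ MemHb ξ m g ∧
      Tendsto (fun i => hbNormSq ξ m fun z => f (κ i) (φ z) - g z) atTop (nhds 0)

/-- The composition operator `C_φ` is Hilbert–Schmidt on `H(b)`: it is bounded and the sum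
of `⦀C_φ e⦀²` over the orthonormal basis `{a₁ z^k}ₖ ∪ {z^j}_{j<N}` of
`(H(b), ⦀·⦀_b)` is finite (the finite part of the sum being automatically finite). -/
def CompHSHb {n : ℕ} (ξ : Fin n → ℂ) (m : Fin n → ℕ) (φ : ℂ → ℂ) : Prop :=
  CompBddHb ξ m φ ∧
  Summable fun k : ℕ => hbNormSq ξ m fun z => a1fun ξ m (φ z) * φ z ^ k

/-- The weighted composition operator `W_{u,φ} f = u · (f ∘ φ)` maps `H²` boundedly
into itself. -/
def WCompBddH2 (u φ : ℂ → ℂ) : Prop :=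
  (∀ f, MemH2 f → MemH2 fun z => u z * f (φ z)) ∧
  ∃ C : ℝ, ∀ f, MemH2 f →
    h2NormSq (fun z => u z * f (φ z)) ≤ C * h2NormSq f

/-- The weighted composition operator `W_{u,φ}` is compact on `H²`. -/
def WCompCompactH2 (u φ : ℂ → ℂ) : Prop :=
  WCompBddH2 u φ ∧
  ∀ f : ℕ → ℂ → ℂ, (∀ k, MemH2 (f k) ∧ h2NormSq (f k) ≤ 1) →
    ∃ (κ : ℕ → ℕ) (g : ℂ → ℂ), StrictMono κ ∧ MemH2 g ∧
      Tendsto (fun i => h2NormSq fun z => u z * f (κ i) (φ z) - g z) atTop (nhds 0)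

/-- The weighted composition operator `W_{u,φ}` is Hilbert–Schmidt on `H²`
(sum over the orthonormal basis `{z^k}` of `H²`). -/
def WCompHSH2 (u φ : ℂ → ℂ) : Prop :=
  WCompBddH2 u φ ∧ Summable fun k : ℕ => h2NormSq fun z => u z * φ z ^ k

/-- The function `u = (a₁ ∘ φ) · ∏_{j ≥ p} (φ − φ(ξⱼ))^{mⱼ} / a₁`, where `Λ j = φ(ξ j)`
are the non-tangential limits of `φ` at the zeros of the mate. -/
def ufun {n : ℕ} (p : ℕ) (ξ : Fin n → ℂ) (m : Fin n → ℕ) (Λ : Fin n → ℂ)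
    (φ : ℂ → ℂ) : ℂ → ℂ :=
  fun z => a1fun ξ m (φ z) *
    (∏ j ∈ Finset.univ.filter fun j : Fin n => p ≤ (j : ℕ), (φ z - Λ j) ^ (m j)) /
      a1fun ξ m z

/-- The reproducing kernel of the de Branges–Rovnyak space `H(c)`:
`k_λ^c(z) = (1 − conj(c(λ)) c(z)) / (1 − conj(λ) z)`, as a function of the parameter `λ`
and the evaluation point `z`. -/
def rkKernel (c : ℂ → ℂ) (lam z : ℂ) : ℂ :=
  (1 - (starRingEnd ℂ) (c lam) * c z) / (1 - (starRingEnd ℂ) lam * z)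

/-- `f` belongs to the reproducing kernel Hilbert space `H(c)` with squared norm at
most `t`: for all finite linear combinations of kernels,
`|⟨f, Σ αᵢ k_{λᵢ}⟩|² ≤ t · ‖Σ αᵢ k_{λᵢ}‖²`. -/
def HbRKBound (c f : ℂ → ℂ) (t : ℝ) : Prop :=
  ∀ (k : ℕ) (lam α : Fin k → ℂ), (∀ i, lam i ∈ unitDisk) →
    ‖∑ i, (starRingEnd ℂ) (α i) * f (lam i)‖ ^ 2 ≤
      t * (∑ i, ∑ j, α i * (starRingEnd ℂ) (α j) * rkKernel c (lam i) (lam j)).re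

/-- Membership in the de Branges–Rovnyak space `H(c)` (general RKHS definition). -/
def MemHbRK (c f : ℂ → ℂ) : Prop := ∃ t : ℝ, HbRKBound c f t

/-- `φ` has an angular derivative in the sense of Carathéodory at `ξ`:
`φ` and `φ'` have non-tangential limits at `ξ` and `|φ(ξ)| = 1`. -/
def HasADC (φ : ℂ → ℂ) (ξ : ℂ) : Prop :=
  ∃ L L' : ℂ, ‖L‖ = 1 ∧ NTLimit φ ξ L ∧ NTLimit (deriv φ) ξ L'

/-- The measure `μ_{u,φ}(E) = ∫_{φ⁻¹(E) ∩ T} |u|² dm` (boundary values on the circle,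
normalized Lebesgue measure). -/
def muMeas (u φ : ℂ → ℂ) (E : Set ℂ) : ENNReal :=
  (ENNReal.ofReal (2 * Real.pi))⁻¹ *
    ∫⁻ θ in Set.Ioc (0:ℝ) (2 * Real.pi),
      (if bdryVal φ (Complex.exp (θ * Complex.I)) ∈ E then
        ENNReal.ofReal (‖bdryVal u (Complex.exp (θ * Complex.I))‖ ^ 2) else 0)

/-- `μ_{u,φ}` is a Carleson measure: `μ(S(ζ,r)) ≤ M r` for all Carleson windows
`S(ζ,r) = {z : |z| ≤ 1, |z − ζ| ≤ r}`, `ζ ∈ T`, `0 < r < 1`. -/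
def IsCarleson (u φ : ℂ → ℂ) : Prop :=
  ∃ M : ℝ, 0 < M ∧ ∀ ζ ∈ unitCircle, ∀ r ∈ Set.Ioo (0:ℝ) 1,
    muMeas u φ (Metric.closedBall ζ r ∩ Metric.closedBall 0 1) ≤ ENNReal.ofReal (M * r)

/-- `μ_{u,φ}` is a vanishing Carleson measure: `sup_{ζ∈T} μ(S(ζ,r))/r → 0` as `r → 0`. -/
def IsVanishingCarleson (u φ : ℂ → ℂ) : Prop :=
  ∀ ε > (0:ℝ), ∃ r₀ ∈ Set.Ioo (0:ℝ) 1, ∀ r ∈ Set.Ioo (0:ℝ) r₀, ∀ ζ ∈ unitCircle,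
    muMeas u φ (Metric.closedBall ζ r ∩ Metric.closedBall 0 1) ≤ ENNReal.ofReal (ε * r)

/-- The reproducing kernel integral
`∫_T (1 − |w|²) |u(ξ)|² / |1 − conj(w) φ(ξ)|² dm(ξ)`. -/
def repKerInt (u φ : ℂ → ℂ) (w : ℂ) : ENNReal :=
  (ENNReal.ofReal (2 * Real.pi))⁻¹ *
    ∫⁻ θ in Set.Ioc (0:ℝ) (2 * Real.pi),
      ENNReal.ofReal ((1 - ‖w‖ ^ 2) * ‖bdryVal u (Complex.exp (θ * Complex.I))‖ ^ 2 /
        ‖1 - (starRingEnd ℂ) w * bdryVal φ (Complex.exp (θ * Complex.I))‖ ^ 2)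

/-!
Here `H(b) = (z - 1) H² ⊕ ℂ`. Every `g ∈ H²` satisfies `|g(z)|² (1 - |z|²) ≤ ‖g‖²`, so inside a
Stolz angle at `1`, where `|z - 1| ≲ 1 - |z|`, one has `|(z - 1) g(z)|² ≲ |z - 1| ‖g‖² → 0`.
Hence `(z - 1) g + e` has non-tangential limit `e` at `1`, and `|e|² ≤ ⦀(z - 1) g + e⦀²`.
Applied to `C_φ z = φ`, this gives the non-tangential limit `c = φ(1)`, which lies in the closed
disk. If `|c| = 1`, the test functions `f_N = (z - 1) ∑_{k<N} (c̄ z)^k` have `⦀f_N⦀² = N`, while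
`f_N ∘ φ` has boundary value `f_N(c) = (c - 1) N` at `1`; boundedness of `C_φ` then forces
`|c - 1|² N² ≤ C N` for all `N`, so `c = 1`.
-/

open Polynomial Topology

lemma mem_unitDisk_iff {z : ℂ} : z ∈ unitDisk ↔ ‖z‖ < 1 := mem_ball_zero_iff

section HardySpace

lemma taylorCoeff_congr {f g : ℂ → ℂ} (h : EqOn f g unitDisk) (k : ℕ) :
    taylorCoeff f k = taylorCoeff g k := by
  have hfg : f =ᶠ[𝓝 0] g := eventuallyEq_of_mem (Metric.ball_mem_nhds 0 one_pos) h
  rw [taylorCoeff, taylorCoeff, hfg.iteratedDeriv_eq k]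

lemma h2NormSq_congr {f g : ℂ → ℂ} (h : EqOn f g unitDisk) : h2NormSq f = h2NormSq g := by
  simp only [h2NormSq, taylorCoeff_congr h]

lemma h2NormSq_nonneg (f : ℂ → ℂ) : 0 ≤ h2NormSq f := tsum_nonneg fun _ => sq_nonneg _

lemma hasSum_taylorCoeff_mul_pow {f : ℂ → ℂ} (hf : DifferentiableOn ℂ f unitDisk) {z : ℂ}
    (hz : z ∈ unitDisk) : HasSum (fun k => taylorCoeff f k * z ^ k) (f z) := by
  have h := Complex.hasSum_taylorSeries_on_ball hf hz
  simp only [sub_zero, smul_eq_mul] at h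
  refine (funext fun k => ?_ : (fun k => taylorCoeff f k * z ^ k) = _) ▸ h
  rw [taylorCoeff]
  ring

lemma norm_sq_mul_le_h2NormSq {g : ℂ → ℂ} (hg : MemH2 g) {z : ℂ} (hz : z ∈ unitDisk) :
    ‖g z‖ ^ 2 * (1 - ‖z‖ ^ 2) ≤ h2NormSq g := by
  obtain ⟨hgd, hgs⟩ := hg
  have hz2 : ‖z‖ ^ 2 < 1 := pow_lt_one₀ (norm_nonneg z) (mem_unitDisk_iff.mp hz) two_ne_zero
  have hgeo := hasSum_geometric_of_lt_one (sq_nonneg ‖z‖) hz2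
  rw [← le_div_iff₀ (sub_pos.mpr hz2), div_eq_mul_inv]
  have hpartial : ∀ n, ‖∑ k ∈ Finset.range n, taylorCoeff g k * z ^ k‖ ^ 2 ≤
      h2NormSq g * (1 - ‖z‖ ^ 2)⁻¹ := fun n => calc
    ‖∑ k ∈ Finset.range n, taylorCoeff g k * z ^ k‖ ^ 2
        ≤ (∑ k ∈ Finset.range n, ‖taylorCoeff g k‖ * ‖z‖ ^ k) ^ 2 := by
      gcongr
      exact (norm_sum_le _ _).trans_eq (by simp only [norm_mul, norm_pow])
    _ ≤ (∑ k ∈ Finset.range n, ‖taylorCoeff g k‖ ^ 2) * ∑ k ∈ Finset.range n, (‖z‖ ^ 2) ^ k := by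
      simpa only [← pow_mul, mul_comm 2] using Finset.sum_mul_sq_le_sq_mul_sq (Finset.range n) (fun k => ‖taylorCoeff g k‖)
        fun k => ‖z‖ ^ k
    _ ≤ h2NormSq g * (1 - ‖z‖ ^ 2)⁻¹ := by
      gcongr
      · exact tsum_nonneg fun _ => sq_nonneg _
      · exact hgs.sum_le_tsum _ fun _ _ => sq_nonneg _
      · exact hgeo.summable.sum_le_tsum _ (fun _ _ => by positivity) |>.trans_eq hgeo.tsum_eq
  exact le_of_tendsto' ((hasSum_taylorCoeff_mul_pow hgd hz).tendsto_sum_nat.norm.pow 2) hpartial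

lemma taylorCoeff_polynomial_eval (p : ℂ[X]) (k : ℕ) :
    taylorCoeff (fun z => p.eval z) k = p.coeff k := by
  have hiter : ∀ (j : ℕ) (q : ℂ[X]),
      iteratedDeriv j (fun z => q.eval z) = fun z => (derivative^[j] q).eval z := by
    intro j
    induction j with
    | zero => simp
    | succ j ih =>
      intro q
      rw [iteratedDeriv_succ', funext fun z => q.deriv (x := z), ih, Function.iterate_succ_apply]
  rw [taylorCoeff, hiter]
  dsimp only
  rw [← coeff_zero_eq_eval_zero, coeff_iterate_derivative, zero_add,
    Nat.descFactorial_self, nsmul_eq_mul,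
    mul_div_cancel_left₀ _ (Nat.cast_ne_zero.mpr k.factorial_ne_zero)]

lemma memH2_polynomial_eval (p : ℂ[X]) : MemH2 fun z => p.eval z := by
  refine ⟨p.differentiableOn, summable_of_ne_finset_zero (s := p.support) fun k hk => ?_⟩
  rw [taylorCoeff_polynomial_eval, notMem_support_iff.mp hk, norm_zero, sq, mul_zero]

lemma h2NormSq_polynomial_eval (p : ℂ[X]) {s : Finset ℕ} (hs : ∀ k ∉ s, p.coeff k = 0) :
    h2NormSq (fun z => p.eval z) = ∑ k ∈ s, ‖p.coeff k‖ ^ 2 := by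
  rw [h2NormSq, tsum_eq_sum (s := s) fun k hk => by
    rw [taylorCoeff_polynomial_eval, hs k hk, norm_zero, sq, mul_zero]]
  simp only [taylorCoeff_polynomial_eval]

lemma h2NormSq_C_eval (e : ℂ) : h2NormSq (fun z => (C e).eval z) = ‖e‖ ^ 2 := by
  rw [h2NormSq_polynomial_eval (C e) (s := {0}) fun k hk => coeff_C_of_ne_zero (by simpa using hk),
    Finset.sum_singleton, coeff_C_zero]

end HardySpace

section NonTangentialLimit

lemma tendsto_sub_mul_nhdsWithin_stolzAngle {g : ℂ → ℂ} (hg : MemH2 g) (ξ : ℂ) {M : ℝ}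
    (hM : 0 ≤ M) : Tendsto (fun z => (z - ξ) * g z) (𝓝[stolzAngle ξ M] ξ) (𝓝 0) := by
  have hbound : ∀ z ∈ stolzAngle ξ M,
      ‖(z - ξ) * g z‖ ≤ √(M * h2NormSq g * ‖z - ξ‖) := by
    rintro z ⟨hz, hzM⟩
    have hz1 : ‖z‖ < 1 := mem_unitDisk_iff.mp hz
    have hgrowth : ‖g z‖ ^ 2 * (1 - ‖z‖) ≤ h2NormSq g := by
      refine le_trans ?_ (norm_sq_mul_le_h2NormSq hg hz)
      gcongr
      nlinarith [norm_nonneg z]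
    refine Real.le_sqrt_of_sq_le ?_
    calc ‖(z - ξ) * g z‖ ^ 2 = ‖z - ξ‖ * (‖z - ξ‖ * ‖g z‖ ^ 2) := by rw [norm_mul]; ring
      _ ≤ ‖z - ξ‖ * (M * (1 - ‖z‖) * ‖g z‖ ^ 2) := by gcongr
      _ = ‖z - ξ‖ * M * (‖g z‖ ^ 2 * (1 - ‖z‖)) := by ring
      _ ≤ ‖z - ξ‖ * M * h2NormSq g := by gcongr
      _ = M * h2NormSq g * ‖z - ξ‖ := by ring
  have hcont : Continuous fun z => √(M * h2NormSq g * ‖z - ξ‖) := by fun_prop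
  have hlim := (hcont.tendsto ξ).mono_left (nhdsWithin_le_nhds (s := stolzAngle ξ M))
  rw [sub_self, norm_zero, mul_zero, Real.sqrt_zero] at hlim
  exact squeeze_zero_norm' (eventually_nhdsWithin_of_forall hbound) hlim

lemma ntLimit_of_eqOn_sub_mul_add {F g : ℂ → ℂ} (hg : MemH2 g) {ξ e : ℂ}
    (hF : ∀ z ∈ unitDisk, F z = (z - ξ) * g z + e) : NTLimit F ξ e := by
  intro M hM
  have hlim := (tendsto_sub_mul_nhdsWithin_stolzAngle hg ξ (by linarith)).add_const e
  rw [zero_add] at hlim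
  exact hlim.congr' (eventually_nhdsWithin_of_forall fun z hz => (hF z hz.1).symm)

lemma stolzAngle_nhdsWithin_neBot {ξ : ℂ} (hξ : ‖ξ‖ = 1) {M : ℝ} (hM : 1 ≤ M) :
    (𝓝[stolzAngle ξ M] ξ).NeBot := by
  have hcont : Continuous fun t : ℝ => ((1 - t : ℝ) : ℂ) * ξ := by fun_prop
  have hnhds : Tendsto (fun t : ℝ => ((1 - t : ℝ) : ℂ) * ξ) (𝓝[>] 0) (𝓝 ξ) := by
    simpa using (hcont.tendsto 0).mono_left nhdsWithin_le_nhds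
  have hmem : ∀ t ∈ Ioo (0 : ℝ) 1, ((1 - t : ℝ) : ℂ) * ξ ∈ stolzAngle ξ M := by
    rintro t ⟨ht0, ht1⟩
    have hnorm : ‖((1 - t : ℝ) : ℂ) * ξ‖ = 1 - t := by
      rw [norm_mul, hξ, Complex.norm_real, Real.norm_of_nonneg (by linarith), mul_one]
    have hdist : ‖((1 - t : ℝ) : ℂ) * ξ - ξ‖ = t := by
      rw [show ((1 - t : ℝ) : ℂ) * ξ - ξ = -((t : ℂ) * ξ) by push_cast; ring, norm_neg,
        norm_mul, hξ, Complex.norm_real, Real.norm_of_nonneg ht0.le, mul_one]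
    refine ⟨mem_unitDisk_iff.mpr (by linarith), ?_⟩
    rw [hnorm, hdist]
    nlinarith
  have hray : Tendsto (fun t : ℝ => ((1 - t : ℝ) : ℂ) * ξ) (𝓝[>] 0) (𝓝[stolzAngle ξ M] ξ) :=
    tendsto_nhdsWithin_iff.mpr ⟨hnhds, mem_of_superset (Ioo_mem_nhdsGT one_pos) hmem⟩
  exact hray.neBot

lemma NTLimit.unique {f : ℂ → ℂ} {ξ L L' : ℂ} (hξ : ‖ξ‖ = 1) (h : NTLimit f ξ L)
    (h' : NTLimit f ξ L') : L = L' :=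
  haveI := stolzAngle_nhdsWithin_neBot hξ one_le_two
  tendsto_nhds_unique (h 2 one_lt_two) (h' 2 one_lt_two)

lemma NTLimit.norm_le {f : ℂ → ℂ} {ξ L : ℂ} {R : ℝ} (hξ : ‖ξ‖ = 1) (h : NTLimit f ξ L)
    (hf : ∀ z ∈ unitDisk, ‖f z‖ ≤ R) : ‖L‖ ≤ R :=
  haveI := stolzAngle_nhdsWithin_neBot hξ one_le_two
  le_of_tendsto (h 2 one_lt_two).norm (eventually_nhdsWithin_of_forall fun z hz => hf z hz.1)

lemma NTLimit.continuousAt_comp {f g : ℂ → ℂ} {ξ L : ℂ} (h : NTLimit f ξ L)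
    (hg : ContinuousAt g L) : NTLimit (fun z => g (f z)) ξ (g L) :=
  fun M hM => hg.tendsto.comp (h M hM)

end NonTangentialLimit

lemma nonpos_of_forall_mul_sq_le {a b : ℝ} (h : ∀ N : ℕ, a * N ^ 2 ≤ b * N) : a ≤ 0 := by
  by_contra! ha
  obtain ⟨N, hN⟩ := exists_nat_gt (b / a)
  have hbN : b < a * N := by rwa [div_lt_iff₀ ha, mul_comm] at hN
  have hN1 := h (N + 1)
  push_cast at hN1
  nlinarith

def geomPoly (w : ℂ) (N : ℕ) : ℂ[X] := ∑ k ∈ Finset.range N, C (w ^ k) * X ^ k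

lemma coeff_geomPoly (w : ℂ) (N k : ℕ) :
    (geomPoly w N).coeff k = if k < N then w ^ k else 0 := by
  simp only [geomPoly, finsetSum_coeff, coeff_C_mul, coeff_X_pow, mul_ite, mul_one, mul_zero,
    Finset.sum_ite_eq, Finset.mem_range]

lemma h2NormSq_geomPoly {w : ℂ} (hw : ‖w‖ = 1) (N : ℕ) :
    h2NormSq (fun z => (geomPoly w N).eval z) = N := by
  rw [h2NormSq_polynomial_eval _ (s := Finset.range N) fun k hk => by
    rw [coeff_geomPoly, if_neg (by simpa using hk)]]
  rw [Finset.sum_congr rfl fun k hk => by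
    rw [coeff_geomPoly, if_pos (Finset.mem_range.mp hk), norm_pow, hw, one_pow, one_pow]]
  simp

lemma eval_geomPoly (w z : ℂ) (N : ℕ) :
    (geomPoly w N).eval z = ∑ k ∈ Finset.range N, (w * z) ^ k := by
  simp [geomPoly, eval_finsetSum, mul_pow]

section ModelSpace

local notation "ξ₁" => fun _ : Fin 1 => (1 : ℂ)
local notation "m₁" => fun _ : Fin 1 => (1 : ℕ)

lemma HbDecompOf.eq_C {F g : ℂ → ℂ} {q : ℂ[X]} (h : HbDecompOf ξ₁ m₁ F g q) :
    q = C (q.coeff 0) :=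
  eq_C_of_degree_le_zero (Nat.WithBot.lt_one_iff_le_zero.mp (by simpa using h.2.1))

lemma HbDecompOf.eqOn {F g : ℂ → ℂ} {q : ℂ[X]} (h : HbDecompOf ξ₁ m₁ F g q) :
    ∀ z ∈ unitDisk, F z = (z - 1) * g z + q.coeff 0 := by
  intro z hz
  rw [h.2.2 z hz, h.eq_C, eval_C, coeff_C_zero]
  simp [a1fun]

lemma hbDecompOf_of_eqOn {F g : ℂ → ℂ} (hg : MemH2 g) {e : ℂ}
    (hF : ∀ z ∈ unitDisk, F z = (z - 1) * g z + e) : HbDecompOf ξ₁ m₁ F g (C e) := by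
  refine ⟨hg, degree_C_le.trans_lt (by simp), fun z hz => ?_⟩
  rw [hF z hz, eval_C]
  simp [a1fun]

lemma HbDecompOf.ntLimit {F g : ℂ → ℂ} {q : ℂ[X]} (h : HbDecompOf ξ₁ m₁ F g q) :
    NTLimit F 1 (q.coeff 0) :=
  ntLimit_of_eqOn_sub_mul_add h.1 h.eqOn

lemma HbDecompOf.unique {F g g' : ℂ → ℂ} {q q' : ℂ[X]}
    (h : HbDecompOf ξ₁ m₁ F g q) (h' : HbDecompOf ξ₁ m₁ F g' q') :
    q.coeff 0 = q'.coeff 0 ∧ EqOn g g' unitDisk := by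
  have hcoeff := h.ntLimit.unique norm_one h'.ntLimit
  refine ⟨hcoeff, fun z hz => ?_⟩
  have hz1 : z - 1 ≠ 0 := sub_ne_zero.mpr fun h1 => by
    simp [mem_unitDisk_iff, h1] at hz
  have hsum := (h.eqOn z hz).symm.trans (h'.eqOn z hz)
  rw [hcoeff, add_left_inj] at hsum
  exact mul_left_cancel₀ hz1 hsum

lemma hbNormSq_eq {F g : ℂ → ℂ} {q : ℂ[X]} (h : HbDecompOf ξ₁ m₁ F g q) :
    hbNormSq ξ₁ m₁ F = h2NormSq g + ‖q.coeff 0‖ ^ 2 := by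
  have hF : MemHb ξ₁ m₁ F := ⟨(g, q), h⟩
  have hchosen := hF.choose_spec
  obtain ⟨hcoeff, hg⟩ := hchosen.unique h
  rw [hbNormSq, hbDecomp, dif_pos hF, h2NormSq_congr hg, hchosen.eq_C, h2NormSq_C_eval, hcoeff]

lemma norm_sq_le_hbNormSq_of_ntLimit {F : ℂ → ℂ} {L : ℂ} (hF : MemHb ξ₁ m₁ F)
    (hL : NTLimit F 1 L) : ‖L‖ ^ 2 ≤ hbNormSq ξ₁ m₁ F := by
  obtain ⟨⟨g, q⟩, h⟩ := hF
  rw [hbNormSq_eq h, h.ntLimit.unique norm_one hL]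
  linarith [h2NormSq_nonneg g]

lemma memHb_id : MemHb ξ₁ m₁ fun z => z :=
  ⟨(fun _ => 1, C 1), hbDecompOf_of_eqOn (by simpa using memH2_polynomial_eval (C 1))
    fun z _ => by ring⟩

lemma CompBddHb.eq_one_of_ntLimit {φ : ℂ → ℂ} (hφ : CompBddHb ξ₁ m₁ φ) {c : ℂ} (hc : ‖c‖ = 1)
    (hlim : NTLimit φ 1 c) : c = 1 := by
  obtain ⟨hmap, K, hK⟩ := hφ
  have hconj : (starRingEnd ℂ) c * c = 1 := by
    rw [mul_comm, Complex.mul_conj, Complex.normSq_eq_norm_sq, hc]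
    norm_num
  have hgrowth : ∀ N : ℕ, ‖c - 1‖ ^ 2 * N ^ 2 ≤ K * N := by
    intro N
    set P := geomPoly ((starRingEnd ℂ) c) N
    set f : ℂ → ℂ := fun z => (z - 1) * P.eval z
    have hdec : HbDecompOf ξ₁ m₁ f (fun z => P.eval z) (C 0) :=
      hbDecompOf_of_eqOn (memH2_polynomial_eval P) fun z _ => (add_zero _).symm
    have hf : MemHb ξ₁ m₁ f := ⟨(_, _), hdec⟩
    have hfc : f c = (c - 1) * N := by simp [f, P, eval_geomPoly, hconj]
    have hfφ : NTLimit (fun z => f (φ z)) 1 ((c - 1) * N) :=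
      hfc ▸ hlim.continuousAt_comp (by fun_prop)
    calc ‖c - 1‖ ^ 2 * N ^ 2 = ‖(c - 1) * N‖ ^ 2 := by simp [mul_pow]
      _ ≤ hbNormSq ξ₁ m₁ fun z => f (φ z) := norm_sq_le_hbNormSq_of_ntLimit (hmap f hf) hfφ
      _ ≤ K * hbNormSq ξ₁ m₁ f := hK f hf
      _ = K * N := by
        rw [hbNormSq_eq hdec, h2NormSq_geomPoly (by simpa using hc), coeff_C_zero, norm_zero,
          zero_pow two_ne_zero, add_zero]
  have hsq : ‖c - 1‖ ^ 2 ≤ 0 := nonpos_of_forall_mul_sq_le hgrowth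
  rw [← sub_eq_zero, ← norm_eq_zero]
  exact pow_eq_zero_iff two_ne_zero |>.mp (le_antisymm hsq (sq_nonneg _))

end ModelSpace

theorem sarason_silva_boundary_general
    (φ : ℂ → ℂ)
    (hφmap : ∀ z ∈ unitDisk, φ z ∈ unitDisk)
    (hbdd : CompBddHb (fun _ : Fin 1 => (1:ℂ)) (fun _ => 1) φ) :
    ∃ L, NTLimit φ 1 L ∧ (L ∈ unitDisk ∨ L = 1) := by
  obtain ⟨⟨g, q⟩, hφ⟩ := hbdd.1 _ memHb_id
  have hlim : NTLimit φ 1 (q.coeff 0) := hφ.ntLimit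
  have hle : ‖q.coeff 0‖ ≤ 1 :=
    hlim.norm_le norm_one fun z hz => (mem_unitDisk_iff.mp (hφmap z hz)).le
  refine ⟨q.coeff 0, hlim, ?_⟩
  rcases hle.lt_or_eq with hlt | heq
  · exact Or.inl (mem_unitDisk_iff.mpr hlt)
  · exact Or.inr (hbdd.eq_one_of_ntLimit heq hlim)

/-- Corollary 3.6. For `b(z) = (1+z)/2` (so that `a₁(z) = z − 1`, i.e.
one boundary zero `ξ = 1` of multiplicity `1`), if `C_φ` is bounded on `H(b)` then the
non-tangential limit `φ(1)` is in `D` or equal to `1`. -/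
theorem sarason_silva_boundary
    (b : ℂ → ℂ) (hb : b = fun z => (1 + z) / 2)
    (φ : ℂ → ℂ) (hφd : DifferentiableOn ℂ φ unitDisk)
    (hφmap : ∀ z ∈ unitDisk, φ z ∈ unitDisk)
    (hbdd : CompBddHb (fun _ : Fin 1 => (1:ℂ)) (fun _ => 1) φ) :
    ∃ L, NTLimit φ 1 L ∧ (L ∈ unitDisk ∨ L = 1) :=
  sarason_silva_boundary_general φ hφmap hbdd
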